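/- arXiv:2211.17003 — 3 statements merged into one kernel-verified Lean document; each statement's English description precedes it below -/
import Mathlib

section
/- Let H₁, H₂ be Hilbert spaces and E, E₊, E₋, E₊₋, P, R₊, R₋ bounded operators such that the block operator 𝒫 = [[P, R₋],[R₊, 0]] : H₁ ⊕ H₂ → H₁ ⊕ H₂ is invertible with inverse ℰ = [[E, E₊],[E₋, E₊₋]]. Then P is invertible if and only if E₊₋ is invertible, and in that case P⁻¹ = E − E₊ E₊₋⁻¹ E₋. -/
/-!
If a row `(C', D')` of a left inverse of `[[A, B], [C, D]]` satisfies `C' A + D' C = 0` and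
`C' B + D' D = 1`, a right inverse `S` of `A` yields the right inverse `D - C S B` of `D'`:
substitute `D' C = -C' A` and cancel `A S`; the column relations give the left inverse in the
same way. Applied to `𝒫` with `ℰ` this inverts `E₊₋` when `P` is invertible. Applied to `ℰ` with
`𝒫`, with both block orders reversed so that `E₊₋` is the top-left corner, it inverts `P` by
`E - E₊ E₊₋⁻¹ E₋`.
-/

namespace ContinuousLinearMap

variable {R M₁ M₂ : Type*} [Ring R]
  [TopologicalSpace M₁] [AddCommGroup M₁] [Module R M₁]
  [TopologicalSpace M₂] [AddCommGroup M₂] [Module R M₂] [IsTopologicalAddGroup M₂]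
  {A S : M₁ →L[R] M₁} {B B' : M₂ →L[R] M₁} {C C' : M₁ →L[R] M₂} {D D' : M₂ →L[R] M₂}

theorem comp_schurComplement_eq_one (hA : C'.comp A + D'.comp C = 0)
    (hB : C'.comp B + D'.comp D = 1) (hS : A.comp S = 1) : D'.comp (D - C.comp (S.comp B)) = 1 := by
  have hD'C : D'.comp C = -C'.comp A := eq_neg_of_add_eq_zero_right hA
  calc D'.comp (D - C.comp (S.comp B))
      = D'.comp D - (D'.comp C).comp (S.comp B) := by rw [comp_sub, comp_assoc]
    _ = D'.comp D + C'.comp ((A.comp S).comp B) := by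
        rw [hD'C, neg_comp, sub_neg_eq_add, comp_assoc, comp_assoc]
    _ = 1 := by rw [hS, one_def, id_comp, add_comm, hB]

theorem schurComplement_comp_eq_one [IsTopologicalAddGroup M₁]
    (hB' : A.comp B' + B.comp D' = 0) (hD' : C.comp B' + D.comp D' = 1)
    (hS : S.comp A = 1) : (D - C.comp (S.comp B)).comp D' = 1 := by
  have hBD' : B.comp D' = -A.comp B' := eq_neg_of_add_eq_zero_right hB'
  calc (D - C.comp (S.comp B)).comp D'
      = D.comp D' - C.comp (S.comp (B.comp D')) := by rw [sub_comp, comp_assoc, comp_assoc]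
    _ = D.comp D' + C.comp ((S.comp A).comp B') := by
        rw [hBD', comp_neg, comp_neg, sub_neg_eq_add, comp_assoc]
    _ = 1 := by rw [hS, one_def, id_comp, add_comm, hD']

theorem isUnit_and_ringInverse_eq_schurComplement [IsTopologicalAddGroup M₁]
    (hA : C'.comp A + D'.comp C = 0) (hB : C'.comp B + D'.comp D = 1)
    (hB' : A.comp B' + B.comp D' = 0) (hD' : C.comp B' + D.comp D' = 1) (hAu : IsUnit A) :
    IsUnit D' ∧ Ring.inverse D' = D - C.comp ((Ring.inverse A).comp B) := by
  let u : (M₂ →L[R] M₂)ˣ :=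
    ⟨D', D - C.comp ((Ring.inverse A).comp B),
      comp_schurComplement_eq_one hA hB (Ring.mul_inverse_cancel A hAu),
      schurComplement_comp_eq_one hB' hD' (Ring.inverse_mul_cancel A hAu)⟩
  exact ⟨u.isUnit, Ring.inverse_unit u⟩

end ContinuousLinearMap

theorem stmt_4_general {H₁ H₂ : Type*}
    [NormedAddCommGroup H₁] [InnerProductSpace ℂ H₁]
    [NormedAddCommGroup H₂] [InnerProductSpace ℂ H₂]
    (P : H₁ →L[ℂ] H₁) (Rm : H₂ →L[ℂ] H₁) (Rp : H₁ →L[ℂ] H₂)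
    (E : H₁ →L[ℂ] H₁) (Ep : H₂ →L[ℂ] H₁) (Em : H₁ →L[ℂ] H₂) (Epm : H₂ →L[ℂ] H₂)
    (h1 : P.comp E + Rm.comp Em = 1)
    (h2 : P.comp Ep + Rm.comp Epm = 0)
    (h4 : Rp.comp Ep = 1)
    (h5 : E.comp P + Ep.comp Rp = 1)
    (h7 : Em.comp P + Epm.comp Rp = 0)
    (h8 : Em.comp Rm = 1) :
    (IsUnit P ↔ IsUnit Epm) ∧
      (IsUnit Epm → Ring.inverse P = E - Ep.comp ((Ring.inverse Epm).comp Em)) := by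
  have of_isUnit_P (hP : IsUnit P) : IsUnit Epm :=
    (ContinuousLinearMap.isUnit_and_ringInverse_eq_schurComplement (D := 0) h7
      (by rwa [ContinuousLinearMap.comp_zero, add_zero]) h2
      (by rwa [ContinuousLinearMap.zero_comp, add_zero]) hP).1
  have of_isUnit_Epm (hEpm : IsUnit Epm) :
      IsUnit P ∧ Ring.inverse P = E - Ep.comp ((Ring.inverse Epm).comp Em) :=
    ContinuousLinearMap.isUnit_and_ringInverse_eq_schurComplement (by rwa [add_comm])
      (by rwa [add_comm]) (by rwa [add_comm]) (by rwa [add_comm]) hEpm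
  exact ⟨⟨of_isUnit_P, fun h => (of_isUnit_Epm h).1⟩, fun h => (of_isUnit_Epm h).2⟩

/-- Schur complement formula for the block operator `[[P, R₋], [R₊, 0]]` with inverse
`[[E, E₊], [E₋, E₊₋]]` : `P` is invertible iff `E₊₋` is, and then
`P⁻¹ = E - E₊ E₊₋⁻¹ E₋`. The eight hypotheses are the block relations expressing
`𝒫 ∘ ℰ = Id` and `ℰ ∘ 𝒫 = Id`. -/
theorem stmt_4 {H₁ H₂ : Type*}
    [NormedAddCommGroup H₁] [InnerProductSpace ℂ H₁] [CompleteSpace H₁]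
    [NormedAddCommGroup H₂] [InnerProductSpace ℂ H₂] [CompleteSpace H₂]
    (P : H₁ →L[ℂ] H₁) (Rm : H₂ →L[ℂ] H₁) (Rp : H₁ →L[ℂ] H₂)
    (E : H₁ →L[ℂ] H₁) (Ep : H₂ →L[ℂ] H₁) (Em : H₁ →L[ℂ] H₂) (Epm : H₂ →L[ℂ] H₂)
    (h1 : P.comp E + Rm.comp Em = 1)
    (h2 : P.comp Ep + Rm.comp Epm = 0)
    (h3 : Rp.comp E = 0)
    (h4 : Rp.comp Ep = 1)
    (h5 : E.comp P + Ep.comp Rp = 1)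
    (h6 : E.comp Rm = 0)
    (h7 : Em.comp P + Epm.comp Rp = 0)
    (h8 : Em.comp Rm = 1) :
    (IsUnit P ↔ IsUnit Epm) ∧
      (IsUnit Epm → Ring.inverse P = E - Ep.comp ((Ring.inverse Epm).comp Em)) :=
  stmt_4_general P Rm Rp E Ep Em Epm h1 h2 h4 h5 h7 h8
end

section
/- Let χ ∈ C_c^∞(ℝ) with χ(0) = 1 and, for v with semiclassical Fourier transform 𝓕¹ₕv, define Tₕv(x,y) so that 𝓕ₕ(Tₕv)(ξ,η) = h^{1/2} ⟨η⟩^{−1} (𝓕₁¹χ)(ξ/⟨η⟩) · 𝓕¹ₕv(η). Then (Tₕv)(0,y) = v(y) and ‖Tₕv‖_{H²ₕ(ℝ²)} ≤ C h^{1/2} ‖v‖_{H^{3/2}ₕ(ℝ)} with C depending only on χ. -/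
open MeasureTheory FourierTransform Complex
open scoped Real

/-- One-dimensional semiclassical Fourier transform
`𝓕¹ₕ v (ξ) = (2πh)^{-1/2} ∫ e^{-iyξ/h} v(y) dy` (for `h = 1` this is the unitary Fourier
transform `𝓕₁¹`). -/
noncomputable def semiFT1 (h : ℝ) (v : ℝ → ℂ) (ξ : ℝ) : ℂ :=
  (((2 * Real.pi * h) ^ (-(1:ℝ)/2) : ℝ)) •
    ∫ y : ℝ, Complex.exp (-(Complex.I * (y : ℂ) * (ξ : ℂ)) / (h : ℂ)) * v y

lemma semiFT1_eq (h : ℝ) (hh : 0 < h) (f : ℝ → ℂ) (ξ : ℝ) :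
    semiFT1 h f ξ =
      (((2 * Real.pi * h) ^ (-(1:ℝ)/2) : ℝ)) • 𝓕 f (ξ / (2 * Real.pi * h)) := by
  unfold semiFT1
  congr 1
  rw [Real.fourier_eq']
  refine integral_congr_ae (Filter.Eventually.of_forall fun y => ?_)
  show cexp (-(I * ↑y * ↑ξ) / ↑h) * f y
      = cexp (↑(-2 * Real.pi * inner ℝ y (ξ / (2 * Real.pi * h))) * I) • f y
  rw [smul_eq_mul]
  congr 1
  have hπ : (Real.pi : ℝ) ≠ 0 := Real.pi_ne_zero
  have h0 : inner ℝ y (ξ / (2 * Real.pi * h)) = y * (ξ / (2 * Real.pi * h)) := by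
    simp only [RCLike.inner_apply, conj_trivial]; ring
  have harg : (-2 * Real.pi * (y * (ξ / (2 * Real.pi * h))) : ℝ) = -(y * ξ) / h := by
    field_simp
  rw [h0, harg]
  push_cast
  field_simp

lemma aux_weight (u : SchwartzMap ℝ ℂ) (a b : ℝ) :
    Integrable (fun x : ℝ => (a + b * x ^ 2) ^ 2 * ‖u x‖ ^ 2) := by
  obtain ⟨M, hM0, hM⟩ := u.decay 0 0
  simp only [pow_zero, norm_iteratedFDeriv_zero, one_mul] at hM
  have hInt : Integrable (fun x : ℝ =>
      M * (a ^ 2 * ‖u x‖ + 2 * |a| * |b| * (‖x‖ ^ 2 * ‖u x‖) + b ^ 2 * (‖x‖ ^ 4 * ‖u x‖))) := by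
    refine Integrable.const_mul ?_ M
    exact ((u.integrable.norm.const_mul _).add
      ((u.integrable_pow_mul volume 2).const_mul _)).add
      ((u.integrable_pow_mul volume 4).const_mul _)
  refine hInt.mono' ?_ (Filter.Eventually.of_forall fun x => ?_)
  · exact (((continuous_const.add (continuous_const.mul (continuous_pow 2))).pow 2).mul
      ((u.continuous.norm.pow 2))).aestronglyMeasurable
  · have hx2 : ‖x‖ ^ 2 = x ^ 2 := by rw [Real.norm_eq_abs, _root_.sq_abs]
    have hx4 : ‖x‖ ^ 4 = x ^ 4 := by
      rw [Real.norm_eq_abs, ← _root_.abs_pow, _root_.abs_of_nonneg (by positivity)]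
    have hu : ‖u x‖ ≤ M := hM x
    have hu0 : (0:ℝ) ≤ ‖u x‖ := norm_nonneg _
    have h1 : (a + b * x ^ 2) ^ 2 ≤ (|a| + |b| * x ^ 2) ^ 2 := by
      nlinarith [le_abs_self (a * b), abs_mul a b, sq_nonneg x, _root_.sq_abs a, _root_.sq_abs b,
        sq_nonneg (x ^ 2)]
    have h2 : ‖u x‖ ^ 2 ≤ M * ‖u x‖ := by nlinarith
    rw [Real.norm_eq_abs, _root_.abs_of_nonneg (by positivity)]
    calc (a + b * x ^ 2) ^ 2 * ‖u x‖ ^ 2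
        ≤ (|a| + |b| * x ^ 2) ^ 2 * (M * ‖u x‖) := by
          apply mul_le_mul h1 h2 (by positivity) (by positivity)
      _ = M * (a ^ 2 * ‖u x‖ + 2 * |a| * |b| * (‖x‖ ^ 2 * ‖u x‖) + b ^ 2 * (‖x‖ ^ 4 * ‖u x‖)) := by
          rw [hx2, hx4]
          linear_combination (M * ‖u x‖) * _root_.sq_abs a +
            (M * ‖u x‖ * x ^ 4) * _root_.sq_abs b

lemma aux_weight_comp (u : SchwartzMap ℝ ℂ) (a : ℝ) (ha : a ≠ 0) :
    Integrable (fun x : ℝ => (1 + x ^ 2) ^ 2 * ‖u (x / a)‖ ^ 2) := by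
  have h1 := (aux_weight u 1 (a ^ 2)).comp_div ha
  refine h1.congr (Filter.Eventually.of_forall fun x => ?_)
  simp only []
  rw [show a ^ 2 * (x / a) ^ 2 = x ^ 2 by field_simp]

set_option maxHeartbeats 1600000 in
/-- The extension operator `Tₕ`: if `G = 𝓕ₕ(Tₕ v)` is given by
`G(ξ,η) = h^{1/2} ⟨η⟩⁻¹ (𝓕₁¹χ)(ξ/⟨η⟩) 𝓕¹ₕv(η)` with `χ(0) = 1`, then the inverse
semiclassical Fourier transform of `G` restricted to `x = 0` equals `v`, and
`‖Tₕv‖_{H²ₕ(ℝ²)} ≤ C h^{1/2} ‖v‖_{H^{3/2}ₕ(ℝ)}` with `C` depending only on `χ`. -/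
theorem stmt_7 (χ : SchwartzMap ℝ ℂ) (hχ : χ 0 = 1) :
    ∃ C > 0, ∀ h ∈ Set.Ioc (0:ℝ) 1, ∀ v : SchwartzMap ℝ ℂ, ∀ G : ℝ × ℝ → ℂ,
      (∀ p : ℝ × ℝ,
        G p = ((h ^ ((1:ℝ)/2) * (Real.sqrt (1 + p.2 ^ 2))⁻¹ : ℝ)) •
          (semiFT1 1 (fun x => χ x) (p.1 / Real.sqrt (1 + p.2 ^ 2)) *
            semiFT1 h (fun y => v y) p.2)) →
      (∀ y : ℝ,
        (((2 * Real.pi * h)⁻¹ : ℝ)) •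
            (∫ p : ℝ × ℝ,
              Complex.exp (Complex.I * ((0 * p.1 + y * p.2 : ℝ) : ℂ) / (h : ℂ)) * G p)
          = v y) ∧
      Real.sqrt (∫ p : ℝ × ℝ, (1 + p.1 ^ 2 + p.2 ^ 2) ^ 2 * ‖G p‖ ^ 2) ≤
        C * h ^ ((1:ℝ)/2) *
          Real.sqrt (∫ η : ℝ, (1 + η ^ 2) ^ ((3:ℝ)/2) * ‖semiFT1 h (fun y => v y) η‖ ^ 2) := by
  have h2π : (0:ℝ) < 2 * Real.pi := Real.two_pi_pos
  set F : ℝ → ℂ := semiFT1 1 (fun x => χ x) with hFdef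
  set u₁ : SchwartzMap ℝ ℂ := SchwartzMap.fourierTransformCLM ℂ χ with hu₁def
  have hu₁ : ⇑u₁ = 𝓕 ⇑χ := by rw [hu₁def]; rfl
  have hFform : F = fun ξ => (((2 * Real.pi) ^ (-(1:ℝ)/2) : ℝ)) • u₁ (ξ / (2 * Real.pi)) := by
    funext ξ
    rw [hFdef]
    rw [semiFT1_eq 1 one_pos _ ξ]
    rw [mul_one, hu₁]
  have hFcont : Continuous F := by
    rw [hFform]
    exact ((u₁.continuous.comp (continuous_id.div_const _)).fun_const_smul _)
  have hFint : Integrable F := by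
    rw [hFform]
    exact (u₁.integrable.comp_div h2π.ne').fun_smul _
  have hQint : Integrable (fun ζ : ℝ => (1 + ζ ^ 2) ^ 2 * ‖F ζ‖ ^ 2) := by
    refine (((aux_weight_comp u₁ (2 * Real.pi) h2π.ne').const_mul
      (((2 * Real.pi) ^ (-(1:ℝ)/2) : ℝ) ^ 2)).congr (Filter.Eventually.of_forall fun ζ => ?_))
    rw [hFform]
    simp only []
    rw [norm_smul, Real.norm_eq_abs,
      _root_.abs_of_nonneg (Real.rpow_nonneg h2π.le _), mul_pow]
    ring
  have hJ : (∫ ζ : ℝ, F ζ) = (((2 * Real.pi) ^ (-(1:ℝ)/2) * (2 * Real.pi) : ℝ) : ℂ) := by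
    have h𝓕int : Integrable (𝓕 ⇑χ) := hu₁ ▸ u₁.integrable
    have hinv : (∫ ω : ℝ, u₁ ω) = 1 := by
      have h1 : (∫ ω : ℝ, u₁ ω) = 𝓕⁻ (𝓕 ⇑χ) 0 := by
        rw [Real.fourierInv_eq]
        simp [hu₁]
      rw [h1, χ.continuous.fourierInv_fourier_eq χ.integrable h𝓕int, hχ]
    rw [hFform, integral_smul, Measure.integral_comp_div (fun x => u₁ x) (2 * Real.pi),
      hinv, _root_.abs_of_pos h2π]
    simp [Complex.real_smul]
  refine ⟨Real.sqrt (∫ ζ : ℝ, (1 + ζ ^ 2) ^ 2 * ‖F ζ‖ ^ 2) + 1, by positivity, ?_⟩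
  rintro h ⟨hh0, hh1⟩ v G hG
  have hGeq : G = fun p : ℝ × ℝ => ((h ^ ((1:ℝ)/2) * (Real.sqrt (1 + p.2 ^ 2))⁻¹ : ℝ)) •
      (F (p.1 / Real.sqrt (1 + p.2 ^ 2)) * semiFT1 h (fun y => v y) p.2) := funext hG
  subst hGeq
  have hs : (0:ℝ) < 2 * Real.pi * h := by positivity
  set W : ℝ → ℂ := semiFT1 h (fun y => v y) with hWdef
  set u₂ : SchwartzMap ℝ ℂ := SchwartzMap.fourierTransformCLM ℂ v with hu₂def
  have hu₂ : ⇑u₂ = 𝓕 ⇑v := by rw [hu₂def]; rfl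
  have hWform : W = fun η =>
      (((2 * Real.pi * h) ^ (-(1:ℝ)/2) : ℝ)) • u₂ (η / (2 * Real.pi * h)) := by
    funext η; rw [hWdef, semiFT1_eq h hh0 _ η, hu₂]
  have hWcont : Continuous W := by
    rw [hWform]; exact ((u₂.continuous.comp (continuous_id.div_const _)).fun_const_smul _)
  have hWint : Integrable W := by
    rw [hWform]; exact (u₂.integrable.comp_div hs.ne').fun_smul _
  have hT0 : ∀ η : ℝ, 0 < Real.sqrt (1 + η ^ 2) := fun η => Real.sqrt_pos.2 (by positivity)
  have hTcont : Continuous fun η : ℝ => Real.sqrt (1 + η ^ 2) :=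
    Real.continuous_sqrt.comp (by continuity)
  constructor
  · -- Part 1: trace identity
    intro y
    -- the integrand
    set f : ℝ × ℝ → ℂ := fun p =>
      Complex.exp (Complex.I * ((0 * p.1 + y * p.2 : ℝ) : ℂ) / (h : ℂ)) *
        (((h ^ ((1:ℝ)/2) * (Real.sqrt (1 + p.2 ^ 2))⁻¹ : ℝ)) •
          (F (p.1 / Real.sqrt (1 + p.2 ^ 2)) * W p.2)) with hfdef
    -- exponential norm
    have hexparg : ∀ η : ℝ, Complex.I * ((0 * (0:ℝ) + y * η : ℝ) : ℂ) / (h : ℂ)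
        = (((y * η / h : ℝ) : ℂ)) * Complex.I := by
      intro η; push_cast; field_simp; ring
    -- the slice as a nice function
    have hslice_eq : ∀ η : ℝ, (fun ξ : ℝ => f (ξ, η)) = fun ξ =>
        F (ξ / Real.sqrt (1 + η ^ 2)) *
          (Complex.exp (Complex.I * ((y * η : ℝ) : ℂ) / (h : ℂ)) *
            (((h ^ ((1:ℝ)/2) * (Real.sqrt (1 + η ^ 2))⁻¹ : ℝ) : ℂ)) * W η) := by
      intro η
      funext ξ
      rw [hfdef]
      simp only [zero_mul, zero_add]
      rw [Complex.real_smul]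
      push_cast
      ring
    have hslice_int : ∀ η : ℝ, Integrable (fun ξ : ℝ => f (ξ, η)) := by
      intro η
      rw [hslice_eq η]
      exact (hFint.comp_div (hT0 η).ne').mul_const _
    have hnormexp : ∀ η : ℝ, ‖Complex.exp (Complex.I * ((y * η : ℝ) : ℂ) / (h : ℂ))‖ = 1 := by
      intro η
      have : Complex.I * ((y * η : ℝ) : ℂ) / (h : ℂ) = (((y * η / h : ℝ) : ℂ)) * Complex.I := by
        push_cast; ring
      rw [this, Complex.norm_exp_ofReal_mul_I]
    have hfcont : Continuous f := by
      rw [hfdef]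
      apply Continuous.mul
      · exact Complex.continuous_exp.comp (((continuous_const.mul
          ((continuous_ofReal.comp ((continuous_const.mul continuous_fst).add
            (continuous_const.mul continuous_snd))))).div_const _))
      · apply Continuous.fun_smul
        · exact continuous_const.mul ((hTcont.comp continuous_snd).inv₀ fun p => (hT0 p.2).ne')
        · exact (hFcont.comp ((continuous_fst.div (hTcont.comp continuous_snd))
            fun p => (hT0 p.2).ne')).mul (hWcont.comp continuous_snd)
    have hfint : Integrable f (volume.prod volume) := by
      rw [integrable_prod_iff' hfcont.aestronglyMeasurable]
      refine ⟨Filter.Eventually.of_forall hslice_int, ?_⟩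
      have hFnormint : Integrable fun ξ : ℝ => ‖F ξ‖ := hFint.norm
      refine ((hWint.norm.const_mul ((∫ ξ : ℝ, ‖F ξ‖) * h ^ ((1:ℝ)/2))).congr
        (Filter.Eventually.of_forall fun η => ?_))
      have h1 : (fun ξ : ℝ => ‖f (ξ, η)‖) = fun ξ =>
          ‖F (ξ / Real.sqrt (1 + η ^ 2))‖ * ((h ^ ((1:ℝ)/2) * (Real.sqrt (1 + η ^ 2))⁻¹) * ‖W η‖) := by
        funext ξ
        rw [congrFun (hslice_eq η) ξ]
        rw [norm_mul, norm_mul, norm_mul, hnormexp η, Complex.norm_real, Real.norm_eq_abs,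
          _root_.abs_of_nonneg (by positivity : (0:ℝ) ≤ h ^ ((1:ℝ)/2) * (Real.sqrt (1 + η ^ 2))⁻¹)]
        ring
      simp only []
      rw [h1, MeasureTheory.integral_mul_const,
        Measure.integral_comp_div (fun x => ‖F x‖) (Real.sqrt (1 + η ^ 2)),
        _root_.abs_of_pos (hT0 η), smul_eq_mul]
      have := (hT0 η).ne'
      field_simp
    -- inner integral
    have hinner : ∀ η : ℝ, (∫ ξ : ℝ, f (ξ, η)) =
        ((((2 * Real.pi) ^ (-(1:ℝ)/2) * (2 * Real.pi) * h ^ ((1:ℝ)/2) : ℝ)) : ℂ) *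
          (Complex.exp (Complex.I * ((y * η : ℝ) : ℂ) / (h : ℂ)) * W η) := by
      intro η
      rw [hslice_eq η, MeasureTheory.integral_mul_const,
        Measure.integral_comp_div (fun x => F x) (Real.sqrt (1 + η ^ 2)), hJ,
        _root_.abs_of_pos (hT0 η), Complex.real_smul]
      have hT := (hT0 η).ne'
      have hTc : ((Real.sqrt (1 + η ^ 2) : ℝ) : ℂ) ≠ 0 := by exact_mod_cast hT
      push_cast
      field_simp
    -- outer integral
    set U : ℝ → ℂ := fun ω =>
      Complex.exp (((2 * Real.pi * (inner ℝ ω y : ℝ) : ℝ) : ℂ) * Complex.I) • (𝓕 ⇑v) ω with hUdef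
    have hUval : (∫ ω : ℝ, U ω) = v y := by
      have h1 : (∫ ω : ℝ, U ω) = 𝓕⁻ (𝓕 ⇑v) y := (Real.fourierInv_eq' (𝓕 ⇑v) y).symm
      rw [h1, v.integrable.fourierInv_fourier_eq (hu₂ ▸ u₂.integrable) v.continuous.continuousAt]
    have houter_pt : ∀ η : ℝ, Complex.exp (Complex.I * ((y * η : ℝ) : ℂ) / (h : ℂ)) * W η
        = ((((2 * Real.pi * h) ^ (-(1:ℝ)/2) : ℝ)) : ℂ) * U (η / (2 * Real.pi * h)) := by
      intro η
      rw [hWform]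
      simp only [hUdef, Complex.real_smul, hu₂, smul_eq_mul]
      have hi : (inner ℝ (η / (2 * Real.pi * h)) y : ℝ) = (η / (2 * Real.pi * h)) * y := by
        simp only [RCLike.inner_apply, conj_trivial]; ring
      rw [hi]
      have harg : (2 * Real.pi * (η / (2 * Real.pi * h) * y) : ℝ) = y * η / h := by
        field_simp
      rw [harg]
      have hexp : Complex.I * ((y * η : ℝ) : ℂ) / (h : ℂ) = (((y * η / h : ℝ)) : ℂ) * Complex.I := by
        push_cast; ring
      rw [hexp]
      ring
    have houter : (∫ η : ℝ, Complex.exp (Complex.I * ((y * η : ℝ) : ℂ) / (h : ℂ)) * W η)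
        = ((((2 * Real.pi * h) ^ (-(1:ℝ)/2) * (2 * Real.pi * h) : ℝ)) : ℂ) * v y := by
      simp_rw [houter_pt]
      rw [MeasureTheory.integral_const_mul, Measure.integral_comp_div U (2 * Real.pi * h),
        _root_.abs_of_pos hs, Complex.real_smul, hUval]
      push_cast
      ring
    -- scalar arithmetic
    have e2 : ∀ a : ℝ, 0 < a → a ^ ((1:ℝ)/2) * a ^ ((1:ℝ)/2) = a := fun a ha => by
      rw [← Real.rpow_add ha]; norm_num
    have e1 : ∀ a : ℝ, 0 < a → a ^ (-(1:ℝ)/2) * a = a ^ ((1:ℝ)/2) := by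
      intro a ha
      nth_rewrite 2 [← Real.rpow_one a]
      rw [← Real.rpow_add ha]; norm_num
    have hsc : (2 * Real.pi * h)⁻¹ * ((2 * Real.pi) ^ (-(1:ℝ)/2) * (2 * Real.pi) * h ^ ((1:ℝ)/2)
        * ((2 * Real.pi * h) ^ (-(1:ℝ)/2) * (2 * Real.pi * h))) = 1 := by
      rw [e1 _ h2π, e1 _ hs, Real.mul_rpow h2π.le hh0.le]
      calc (2 * Real.pi * h)⁻¹ * ((2 * Real.pi) ^ ((1:ℝ)/2) * h ^ ((1:ℝ)/2)
            * ((2 * Real.pi) ^ ((1:ℝ)/2) * h ^ ((1:ℝ)/2)))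
          = (2 * Real.pi * h)⁻¹ * (((2 * Real.pi) ^ ((1:ℝ)/2) * (2 * Real.pi) ^ ((1:ℝ)/2))
            * (h ^ ((1:ℝ)/2) * h ^ ((1:ℝ)/2))) := by ring
        _ = (2 * Real.pi * h)⁻¹ * (2 * Real.pi * h) := by rw [e2 _ h2π, e2 _ hh0]
        _ = 1 := inv_mul_cancel₀ hs.ne'
    -- assemble
    have hprod : (∫ p : ℝ × ℝ, f p) = ∫ η : ℝ, ∫ ξ : ℝ, f (ξ, η) := integral_prod_symm f hfint
    rw [hprod]
    simp_rw [hinner]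
    rw [MeasureTheory.integral_const_mul, houter, Complex.real_smul]
    have hgen : ∀ (a b c : ℝ) (z : ℂ), a * (b * c) = 1 →
        (a : ℂ) * ((b : ℂ) * ((c : ℂ) * z)) = z := by
      intro a b c z habc
      calc (a : ℂ) * ((b : ℂ) * ((c : ℂ) * z)) = ((a * (b * c) : ℝ) : ℂ) * z := by push_cast; ring
        _ = z := by rw [habc]; simp
    exact hgen _ _ _ _ hsc
  · -- Part 2: norm bound
    set T : ℝ → ℝ := fun η => Real.sqrt (1 + η ^ 2) with hTdef
    have hT0 : ∀ η, 0 < T η := fun η => Real.sqrt_pos.2 (by positivity)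
    have hTsq : ∀ η, T η ^ 2 = 1 + η ^ 2 := fun η => Real.sq_sqrt (by positivity)
    have hTcont : Continuous T := Real.continuous_sqrt.comp (by continuity)
    set Q : ℝ → ℝ := fun ζ => (1 + ζ ^ 2) ^ 2 * ‖F ζ‖ ^ 2 with hQdef
    set A : ℝ := ∫ ζ : ℝ, Q ζ with hAdef
    have hA0 : 0 ≤ A := integral_nonneg fun ζ => by positivity
    set r : ℝ → ℝ := fun η => h ^ ((1:ℝ)/2) * (T η)⁻¹ with hrdef
    have hr0 : ∀ η, 0 ≤ r η := fun η => by
      have := (hT0 η).le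
      positivity
    have hhalf : h ^ ((1:ℝ)/2) * h ^ ((1:ℝ)/2) = h := by
      rw [← Real.rpow_add hh0]; norm_num
    -- pointwise identity
    have hpt : ∀ ξ η : ℝ, (1 + ξ ^ 2 + η ^ 2) ^ 2 * ‖(r η : ℝ) • (F (ξ / T η) * W η)‖ ^ 2
        = Q (ξ / T η) * (h * (1 + η ^ 2) * ‖W η‖ ^ 2) := by
      intro ξ η
      rw [norm_smul, Real.norm_eq_abs, _root_.abs_of_nonneg (hr0 η), norm_mul, hQdef]
      simp only [hrdef]
      set b := h ^ ((1:ℝ)/2) with hbdef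
      have hη2 : η ^ 2 = T η ^ 2 - 1 := by rw [hTsq]; ring
      rw [hη2, ← hhalf]
      have ht := (hT0 η).ne'
      field_simp
      ring
    -- the integrand as a function
    set g : ℝ × ℝ → ℝ := fun p => (1 + p.1 ^ 2 + p.2 ^ 2) ^ 2 *
        ‖((h ^ ((1:ℝ)/2) * (T p.2)⁻¹ : ℝ)) • (F (p.1 / T p.2) * W p.2)‖ ^ 2 with hgdef
    have hg_eq : ∀ p : ℝ × ℝ, g p = Q (p.1 / T p.2) * (h * (1 + p.2 ^ 2) * ‖W p.2‖ ^ 2) :=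
      fun p => hpt p.1 p.2
    have h32 : ∀ η : ℝ, (1 + η ^ 2) * T η = (1 + η ^ 2) ^ ((3:ℝ)/2) := by
      intro η
      have h1 : (0:ℝ) < 1 + η ^ 2 := by positivity
      rw [hTdef]
      simp only []
      rw [Real.sqrt_eq_rpow]
      nth_rewrite 1 [← Real.rpow_one (1 + η ^ 2)]
      rw [← Real.rpow_add h1]
      norm_num
    have hW2 : Integrable (fun η : ℝ => (1 + η ^ 2) ^ 2 * ‖W η‖ ^ 2) := by
      refine ((aux_weight_comp u₂ (2 * Real.pi * h) hs.ne').const_mul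
        (((2 * Real.pi * h) ^ (-(1:ℝ)/2) : ℝ) ^ 2)).congr (Filter.Eventually.of_forall fun η => ?_)
      rw [hWform]
      simp only []
      rw [norm_smul, Real.norm_eq_abs, _root_.abs_of_nonneg (Real.rpow_nonneg hs.le _), mul_pow]
      ring
    have hDint : Integrable (fun η : ℝ => h * A * ((1 + η ^ 2) ^ ((3:ℝ)/2) * ‖W η‖ ^ 2)) := by
      refine (hW2.const_mul (h * A)).mono' ?_ (Filter.Eventually.of_forall fun η => ?_)
      · refine (continuous_const.mul (Continuous.mul ?_ (hWcont.norm.pow 2))).aestronglyMeasurable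
        exact (by continuity : Continuous fun η : ℝ => 1 + η ^ 2).rpow_const
          fun η => Or.inr (by norm_num)
      · have h1 : (0:ℝ) < 1 + η ^ 2 := by positivity
        have h2 : (1 + η ^ 2 : ℝ) ^ ((3:ℝ)/2) ≤ (1 + η ^ 2) ^ 2 := by
          rw [← Real.rpow_natCast (1 + η ^ 2) 2]
          exact Real.rpow_le_rpow_of_exponent_le (by nlinarith) (by norm_num)
        have h3 : (0:ℝ) ≤ (1 + η ^ 2 : ℝ) ^ ((3:ℝ)/2) := Real.rpow_nonneg h1.le _
        rw [Real.norm_eq_abs, _root_.abs_of_nonneg (by positivity)]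
        calc h * A * ((1 + η ^ 2) ^ ((3:ℝ)/2) * ‖W η‖ ^ 2)
            ≤ h * A * ((1 + η ^ 2) ^ 2 * ‖W η‖ ^ 2) := by
              apply mul_le_mul_of_nonneg_left _ (by positivity)
              apply mul_le_mul_of_nonneg_right h2 (by positivity)
          _ = h * A * ((1 + η ^ 2) ^ 2 * ‖W η‖ ^ 2) := rfl
    -- integrability of g on the product
    have hgcont : Continuous g := by
      rw [hgdef]
      apply Continuous.mul
      · exact ((continuous_const.add ((continuous_pow 2).comp continuous_fst)).add
          ((continuous_pow 2).comp continuous_snd)).pow 2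
      · apply Continuous.pow
        apply Continuous.norm
        apply Continuous.fun_smul
        · exact continuous_const.mul ((hTcont.comp continuous_snd).inv₀ fun p => (hT0 p.2).ne')
        · exact (hFcont.comp ((continuous_fst.div (hTcont.comp continuous_snd))
            fun p => (hT0 p.2).ne')).mul (hWcont.comp continuous_snd)
    have hginner : ∀ η : ℝ, (∫ ξ : ℝ, g (ξ, η))
        = h * A * ((1 + η ^ 2) ^ ((3:ℝ)/2) * ‖W η‖ ^ 2) := by
      intro η
      have h1 : (fun ξ : ℝ => g (ξ, η))
          = fun ξ => Q (ξ / T η) * (h * (1 + η ^ 2) * ‖W η‖ ^ 2) := funext fun ξ => hg_eq (ξ, η)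
      rw [h1, MeasureTheory.integral_mul_const, Measure.integral_comp_div (fun x => Q x) (T η),
        _root_.abs_of_pos (hT0 η), smul_eq_mul, ← hAdef, ← h32 η]
      ring
    have hgslice : ∀ η : ℝ, Integrable (fun ξ : ℝ => g (ξ, η)) := by
      intro η
      have h1 : (fun ξ : ℝ => g (ξ, η))
          = fun ξ => Q (ξ / T η) * (h * (1 + η ^ 2) * ‖W η‖ ^ 2) := funext fun ξ => hg_eq (ξ, η)
      rw [h1]
      exact (hQint.comp_div (hT0 η).ne').mul_const _
    have hgint : Integrable g (volume.prod volume) := by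
      rw [integrable_prod_iff' hgcont.aestronglyMeasurable]
      constructor
      · exact Filter.Eventually.of_forall hgslice
      · refine hDint.congr (Filter.Eventually.of_forall fun η => ?_)
        have hne : (fun ξ : ℝ => ‖g (ξ, η)‖) = fun ξ => g (ξ, η) := by
          funext ξ
          rw [Real.norm_eq_abs, _root_.abs_of_nonneg]
          rw [hgdef]
          positivity
        simp only []
        rw [hne, hginner η]
    have hgval : (∫ p : ℝ × ℝ, g p) = h * A *
        (∫ η : ℝ, (1 + η ^ 2) ^ ((3:ℝ)/2) * ‖W η‖ ^ 2) := by
      have h1 : (∫ p : ℝ × ℝ, g p) = ∫ η : ℝ, ∫ ξ : ℝ, g (ξ, η) :=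
        integral_prod_symm g hgint
      rw [h1]
      simp_rw [hginner]
      rw [MeasureTheory.integral_const_mul]
    -- final estimate
    set I : ℝ := ∫ η : ℝ, (1 + η ^ 2) ^ ((3:ℝ)/2) * ‖W η‖ ^ 2 with hIdef
    have hI0 : 0 ≤ I := integral_nonneg fun η => by positivity
    have hLHS : (∫ p : ℝ × ℝ, (1 + p.1 ^ 2 + p.2 ^ 2) ^ 2 *
        ‖((h ^ ((1:ℝ)/2) * (Real.sqrt (1 + p.2 ^ 2))⁻¹ : ℝ)) •
          (F (p.1 / Real.sqrt (1 + p.2 ^ 2)) * W p.2)‖ ^ 2) = h * A * I := by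
      have hfold : (fun p : ℝ × ℝ => (1 + p.1 ^ 2 + p.2 ^ 2) ^ 2 *
          ‖((h ^ ((1:ℝ)/2) * (Real.sqrt (1 + p.2 ^ 2))⁻¹ : ℝ)) •
            (F (p.1 / Real.sqrt (1 + p.2 ^ 2)) * W p.2)‖ ^ 2) = g := rfl
      rw [hfold]
      exact hgval
    rw [hLHS]
    have hsq : Real.sqrt (h * A * I) = h ^ ((1:ℝ)/2) * Real.sqrt A * Real.sqrt I := by
      rw [Real.sqrt_mul (mul_nonneg hh0.le hA0), Real.sqrt_mul hh0.le, Real.sqrt_eq_rpow]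
    rw [hsq]
    have h4 : (0:ℝ) < h ^ ((1:ℝ)/2) := Real.rpow_pos_of_pos hh0 _
    nlinarith [Real.sqrt_nonneg A, Real.sqrt_nonneg I, h4.le,
      mul_nonneg (mul_nonneg h4.le (Real.sqrt_nonneg A)) (Real.sqrt_nonneg I)]
end

section
/- Let g : ℂ → ℂ, g(z) = (1 + iz)^{−k} with integer k ≥ 2, and t ≥ 0. Then ∫_{Im z = 1/2} e^{−itz} g(z) dz = 0, where the integral is over the horizontal line {x + i/2 : x ∈ ℝ} oriented left to right. -/
open MeasureTheory

section AuxStmt19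

open Set Filter Complex Real
open scoped Topology FourierTransform


lemma aux_real_integrable (n : ℕ) {c : ℝ} (hc : 0 < c) :
    IntegrableOn (fun x : ℝ => x ^ n * Real.exp (-(c * x))) (Ioi 0) := by
  apply integrable_of_isBigO_exp_neg (half_pos hc) (by fun_prop)
  rw [Asymptotics.isBigO_iff]
  refine ⟨1, ?_⟩
  have h2 : Tendsto (fun x : ℝ => x ^ n * Real.exp (-(c / 2) * x)) atTop (𝓝 0) :=
    (tendsto_rpow_mul_exp_neg_mul_atTop_nhds_zero n (c / 2) (half_pos hc)).congr
      fun x => by rw [Real.rpow_natCast]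
  filter_upwards [h2.eventually (eventually_le_nhds one_pos), eventually_ge_atTop (0:ℝ)]
    with x hx hx0
  have hxn : (0:ℝ) ≤ x ^ n := pow_nonneg hx0 n
  have key : x ^ n * Real.exp (-(c * x)) ≤ Real.exp (-(c / 2) * x) := by
    have : x ^ n * Real.exp (-(c * x)) =
        (x ^ n * Real.exp (-(c / 2) * x)) * Real.exp (-(c / 2) * x) := by
      rw [mul_assoc, ← Real.exp_add]; ring_nf
    rw [this]
    have := Real.exp_pos (-(c / 2) * x)
    nlinarith
  rw [Real.norm_eq_abs, Real.norm_eq_abs, _root_.abs_of_nonneg (mul_nonneg hxn (Real.exp_pos _).le),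
    _root_.abs_of_nonneg (Real.exp_pos _).le, one_mul]
  exact key


lemma aux_integrable (n : ℕ) {b : ℂ} (hb : 0 < b.re) :
    IntegrableOn (fun x : ℝ => (x : ℂ) ^ n * Complex.exp (-(b * x))) (Ioi 0) := by
  refine Integrable.mono' ((aux_real_integrable n hb).mono_set subset_rfl)
    (Continuous.aestronglyMeasurable (by continuity)).restrict ?_
  filter_upwards [ae_restrict_mem measurableSet_Ioi] with x (hx : (0:ℝ) < x)
  rw [norm_mul, Complex.norm_exp,
    norm_pow, Complex.norm_real, Real.norm_eq_abs, abs_of_pos hx]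
  simp [mul_comm]

lemma aux_tendsto (m : ℕ) {b : ℂ} (hb : 0 < b.re) :
    Tendsto (fun x : ℝ => (x : ℂ) ^ m * Complex.exp (-(b * x))) atTop (𝓝 0) := by
  rw [tendsto_zero_iff_norm_tendsto_zero]
  have h2 : Tendsto (fun x : ℝ => x ^ m * Real.exp (-b.re * x)) atTop (𝓝 0) :=
    (tendsto_rpow_mul_exp_neg_mul_atTop_nhds_zero m b.re hb).congr
      fun x => by rw [Real.rpow_natCast]
  apply h2.congr'
  filter_upwards [eventually_ge_atTop (0:ℝ)] with x hx
  rw [norm_mul, Complex.norm_exp,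
    norm_pow, Complex.norm_real, Real.norm_eq_abs, _root_.abs_of_nonneg hx]
  norm_num [mul_comm]

lemma aux_integral {b : ℂ} (hb : 0 < b.re) :
    ∀ n : ℕ, ∫ x in Ioi (0:ℝ), (x : ℂ) ^ n * Complex.exp (-(b * x)) = (n.factorial : ℂ) / b ^ (n + 1) := by
  have hb0 : b ≠ 0 := fun h => by simp [h] at hb
  intro n
  induction n with
  | zero =>
    have hd : ∀ x ∈ Ioi (0:ℝ), HasDerivAt (fun x : ℝ => -Complex.exp (-(b * x)) / b)
        ((x:ℂ) ^ 0 * Complex.exp (-(b * x))) x := by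
      intro x _
      have : HasDerivAt (fun z : ℂ => -Complex.exp (-(b * z)) / b)
          (Complex.exp (-(b * x))) (x : ℂ) := by
        have h1 : HasDerivAt (fun z : ℂ => -(b * z)) (-b) (x : ℂ) := by
          simpa using ((hasDerivAt_id (x:ℂ)).const_mul b).fun_neg
        have := (h1.cexp).fun_neg.div_const b
        refine this.congr_deriv ?_
        field_simp
      simpa using this.comp_ofReal
    have := integral_Ioi_of_hasDerivAt_of_tendsto (f := fun x : ℝ => -Complex.exp (-(b * x)) / b)
      (((Complex.continuous_exp.comp (by fun_prop)).neg.div_const b).continuousWithinAt) hd ((aux_integrable 0 hb).congr_fun (fun x _ => rfl) measurableSet_Ioi)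
      (by simpa using ((aux_tendsto 0 hb).neg.div_const b))
    simp only [pow_zero, one_mul] at this ⊢
    rw [this]
    field_simp
    simp
  | succ n ih =>
    -- F x = -(x^(n+1) * exp(-bx))/b ; F' x = x^(n+1) exp(-bx) - (n+1)/b * x^n exp(-bx)
    have hd : ∀ x ∈ Ioi (0:ℝ), HasDerivAt
        (fun x : ℝ => -((x:ℂ) ^ (n+1) * Complex.exp (-(b * x))) / b)
        ((x:ℂ) ^ (n+1) * Complex.exp (-(b * x))
          - ((n:ℂ)+1) / b * ((x:ℂ) ^ n * Complex.exp (-(b * x)))) x := by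
      intro x _
      have h1 : HasDerivAt (fun z : ℂ => -(z ^ (n+1) * Complex.exp (-(b * z))) / b)
          (((x:ℂ) ^ (n+1) * Complex.exp (-(b * x))
            - ((n:ℂ)+1) / b * ((x:ℂ) ^ n * Complex.exp (-(b * x))))) (x : ℂ) := by
        have hp : HasDerivAt (fun z : ℂ => z ^ (n+1)) (((n:ℂ)+1) * (x:ℂ) ^ n) (x : ℂ) := by
          simpa using hasDerivAt_pow (n+1) (x : ℂ)
        have he : HasDerivAt (fun z : ℂ => Complex.exp (-(b * z)))
            (-b * Complex.exp (-(b * (x:ℂ)))) (x : ℂ) := by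
          simpa [mul_comm] using (((hasDerivAt_id ((x:ℂ))).const_mul b).neg).cexp
        have := ((hp.fun_mul he).fun_neg).div_const b
        refine this.congr_deriv ?_
        field_simp
        ring
      simpa using h1.comp_ofReal
    have hint : IntegrableOn (fun x : ℝ => (x:ℂ) ^ (n+1) * Complex.exp (-(b * x))
          - ((n:ℂ)+1) / b * ((x:ℂ) ^ n * Complex.exp (-(b * x)))) (Ioi 0) :=
      (aux_integrable (n+1) hb).sub ((aux_integrable n hb).const_mul _)
    have hF : Tendsto (fun x : ℝ => -((x:ℂ) ^ (n+1) * Complex.exp (-(b * x))) / b)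
        atTop (𝓝 0) := by
      simpa using (aux_tendsto (n+1) hb).neg.div_const b
    have hI := integral_Ioi_of_hasDerivAt_of_tendsto
      ((((by fun_prop : Continuous fun x : ℝ => (x:ℂ) ^ (n+1)).mul
        (Complex.continuous_exp.comp (by fun_prop))).neg.div_const b).continuousWithinAt) hd hint hF
    simp only [Complex.ofReal_zero, ne_eq, hb0, not_false_eq_true, zero_pow, mul_zero,
      neg_zero, zero_div, sub_zero, Nat.succ_ne_zero, Pi.neg_apply, Pi.mul_apply, Function.comp_apply] at hI
    -- hI : ∫ (F') = 0 - F 0 = 0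
    have hsplit : ∫ x in Ioi (0:ℝ), ((x:ℂ) ^ (n+1) * Complex.exp (-(b * x))
          - ((n:ℂ)+1) / b * ((x:ℂ) ^ n * Complex.exp (-(b * x))))
        = (∫ x in Ioi (0:ℝ), (x:ℂ) ^ (n+1) * Complex.exp (-(b * x)))
          - ((n:ℂ)+1) / b * ∫ x in Ioi (0:ℝ), (x:ℂ) ^ n * Complex.exp (-(b * x)) := by
      rw [integral_sub (aux_integrable (n+1) hb) ((aux_integrable n hb).const_mul _),
        integral_const_mul]
    rw [hsplit, ih] at hI
    have : (∫ x in Ioi (0:ℝ), (x:ℂ) ^ (n+1) * Complex.exp (-(b * x)))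
        = ((n:ℂ)+1) / b * ((n.factorial : ℂ) / b ^ (n+1)) := by
      linear_combination hI
    rw [this, Nat.factorial_succ]
    push_cast
    ring

end AuxStmt19

open Set Filter Complex Real in
open scoped Topology FourierTransform in
/-- For `k ≥ 2` and `t ≥ 0`, the integral of `e^{-itz} (1+iz)^{-k}` over the horizontal
line `Im z = 1/2` vanishes. -/
theorem stmt_19 (k : ℕ) (hk : 2 ≤ k) (t : ℝ) (ht : 0 ≤ t) :
    (∫ x : ℝ, Complex.exp (-(Complex.I * (t : ℂ) * ((x : ℂ) + Complex.I / 2))) *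
        (((1 : ℂ) + Complex.I * ((x : ℂ) + Complex.I / 2)) ^ k)⁻¹) = 0 := by
  have hπ : (0:ℝ) < π := Real.pi_pos
  set w : ℝ := t / (2 * π) with hw
  have hw2 : 2 * π * w = t := by rw [hw]; field_simp
  set c : ℂ := (2 * π) ^ k / (k - 1).factorial with hc
  set g : ℝ → ℂ := fun x => (((1:ℂ)/2 + Complex.I * x) ^ k)⁻¹ with hg
  set f : ℝ → ℂ :=
    Set.indicator (Ioi 0) (fun x : ℝ => c * (x:ℂ) ^ (k-1) * Complex.exp (-((π:ℂ) * x))) with hf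
  have hk1 : k - 1 + 1 = k := by omega
  have hfac : ((k-1).factorial : ℂ) ≠ 0 := by exact_mod_cast (k-1).factorial_ne_zero
  have h2π : ((2 * π : ℝ) : ℂ) ≠ 0 := by
    simpa using Complex.ofReal_ne_zero.2 (by positivity)
  -- Fourier transform of f is g
  have hFf : 𝓕 f = g := by
    funext ξ
    have hbase : ((1:ℂ)/2 + Complex.I * ξ) ≠ 0 := fun h => by
      simpa using congrArg Complex.re h
    set b : ℂ := (π : ℂ) + 2 * π * ξ * Complex.I with hb
    have hbre : 0 < b.re := by simp [hb, hπ]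
    have hbeq : b = ((2 * π : ℝ) : ℂ) * ((1:ℂ)/2 + Complex.I * ξ) := by
      push_cast [hb]; ring
    rw [Real.fourier_real_eq_integral_exp_smul]
    have step1 : (∫ x : ℝ, Complex.exp (↑(-2 * π * x * ξ) * Complex.I) • f x)
        = ∫ x in Ioi (0:ℝ), c * ((x:ℂ) ^ (k-1) * Complex.exp (-(b * x))) := by
      rw [← integral_indicator measurableSet_Ioi]
      congr 1
      funext x
      by_cases hx : x ∈ Ioi (0:ℝ)
      · simp only [hf, Set.indicator_of_mem hx, smul_eq_mul]
        calc Complex.exp (↑(-2 * π * x * ξ) * Complex.I)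
              * (c * (x:ℂ) ^ (k-1) * Complex.exp (-((π:ℂ) * x)))
            = c * ((x:ℂ) ^ (k-1) * (Complex.exp (-((π:ℂ) * x))
                * Complex.exp (↑(-2 * π * x * ξ) * Complex.I))) := by ring
          _ = c * ((x:ℂ) ^ (k-1) * Complex.exp (-(b * x))) := by
              rw [← Complex.exp_add]
              congr 2
              push_cast [hb]
              ring
      · simp [hf, Set.indicator_of_notMem hx]
    rw [step1, integral_const_mul, aux_integral hbre (k-1), hk1, hbeq, mul_pow, hg, hc]
    have hA : ((2:ℂ) * ↑π) ^ k ≠ 0 := pow_ne_zero _ (by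
      intro h
      exact h2π (by push_cast; exact h))
    push_cast
    rw [div_mul_div_comm,
      show ((k-1).factorial : ℂ) * (((2:ℂ) * ↑π) ^ k * ((1:ℂ)/2 + Complex.I * ξ) ^ k)
        = (((2:ℂ) * ↑π) ^ k * ((k-1).factorial : ℂ)) * ((1:ℂ)/2 + Complex.I * ξ) ^ k by ring,
      div_mul_cancel_left₀ (mul_ne_zero hA hfac)]
  -- f is integrable
  have hf_int : Integrable f := by
    rw [hf, integrable_indicator_iff measurableSet_Ioi]
    have h := (aux_integrable (k-1) (b := (π:ℂ)) (by simpa using hπ)).const_mul c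
    exact IntegrableOn.congr_fun h (fun x _ => (mul_assoc c _ _).symm) measurableSet_Ioi
  -- g is integrable
  have hg_int : Integrable g := by
    have hbase' : ∀ x : ℝ, ((1:ℂ)/2 + Complex.I * x) ≠ 0 := fun x h => by
      simpa using congrArg Complex.re h
    have hgc : Continuous g := by
      rw [hg]
      exact (Continuous.pow (by fun_prop) k).inv₀ fun x => pow_ne_zero _ (hbase' x)
    refine Integrable.mono' ((integrable_inv_one_add_sq).const_mul (2^k))
      hgc.aestronglyMeasurable ?_
    filter_upwards with x
    have hr : ‖(1:ℂ)/2 + Complex.I * x‖ ^ 2 = 1/4 + x^2 := by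
      rw [Complex.sq_norm, Complex.normSq_apply]
      simp
      ring
    have hr2 : (1:ℝ)/2 ≤ ‖(1:ℂ)/2 + Complex.I * x‖ := by
      have h1 := Complex.abs_re_le_norm ((1:ℂ)/2 + Complex.I * x)
      have hre : ((1:ℂ)/2 + Complex.I * x).re = 1/2 := by simp
      rw [hre] at h1
      have : |(1/2 : ℝ)| = 1/2 := by norm_num
      linarith
    set r := ‖(1:ℂ)/2 + Complex.I * x‖ with hrdef
    have hrpos : (0:ℝ) < r := lt_of_lt_of_le (by norm_num) hr2
    have key : 1 + x^2 ≤ 2^k * r^k := by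
      have h1 : (1:ℝ) ≤ 2 * r := by linarith
      have h2 : (2*r)^2 ≤ (2*r)^k := pow_le_pow_right₀ h1 hk
      have h3 : (2*r)^2 = 4 * (1/4 + x^2) := by rw [mul_pow, hr]; ring
      calc 1 + x^2 ≤ 4 * (1/4 + x^2) := by nlinarith
        _ ≤ (2*r)^k := by rw [← h3]; exact h2
        _ = 2^k * r^k := mul_pow 2 r k
    show ‖(((1:ℂ)/2 + Complex.I * x) ^ k)⁻¹‖ ≤ 2^k * (1 + x^2)⁻¹
    rw [norm_inv, norm_pow, ← hrdef]
    have hRHS : (2:ℝ)^k * (1+x^2)⁻¹ = 2^k/(1+x^2) := by ring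
    rw [hRHS, inv_eq_one_div, div_le_div_iff₀ (by positivity) (by positivity)]
    nlinarith [key]
  -- continuity of f at -w
  have hwle : -w ≤ 0 := by
    rw [neg_nonpos]; positivity
  have hcont : ContinuousAt f (-w) := by
    rcases lt_or_eq_of_le hwle with hneg | hzero
    · have : f =ᶠ[nhds (-w)] fun _ => 0 := by
        filter_upwards [Iio_mem_nhds hneg] with x hx
        rw [hf]
        exact Set.indicator_of_notMem (by simpa using not_lt.2 hx.le) _
      exact ContinuousAt.congr continuousAt_const this.symm
    · rw [hzero]
      have hf0 : f 0 = 0 := by simp [hf]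
      rw [ContinuousAt, hf0]
      apply squeeze_zero_norm (a := fun x : ℝ => ‖c‖ * |x|^(k-1) * Real.exp (-(π*x)))
      · intro x
        by_cases hx : x ∈ Ioi (0:ℝ)
        · rw [hf, Set.indicator_of_mem hx]
          apply le_of_eq
          rw [norm_mul, norm_mul]
          simp only [norm_pow, Complex.norm_real, Complex.norm_exp]
          simp
        · rw [hf, Set.indicator_of_notMem hx]
          simp only [norm_zero]
          positivity
      · have hcg : Continuous fun x : ℝ => ‖c‖ * |x|^(k-1) * Real.exp (-(π*x)) := by
          fun_prop
        have := hcg.tendsto 0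
        simpa [zero_pow (by omega : k - 1 ≠ 0)] using this
  -- inversion
  have key : 𝓕 g w = 0 := by
    have h1 : 𝓕 g w = 𝓕⁻ (𝓕 f) (-w) := by
      rw [Real.fourierInv_eq_fourier_neg, neg_neg, hFf]
    rw [h1, hf_int.fourierInv_fourier_eq (by rwa [hFf]) hcont, hf]
    exact Set.indicator_of_notMem (by simpa using not_lt.2 hwle) _
  -- final assembly
  have main : (∫ x : ℝ, Complex.exp (-(Complex.I * (t : ℂ) * ((x : ℂ) + Complex.I / 2))) *
        (((1 : ℂ) + Complex.I * ((x : ℂ) + Complex.I / 2)) ^ k)⁻¹)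
      = Complex.exp (t/2) * 𝓕 g w := by
    rw [Real.fourier_real_eq_integral_exp_smul, ← integral_const_mul]
    congr 1
    funext x
    have hbase : (1 : ℂ) + Complex.I * ((x : ℂ) + Complex.I / 2) = (1:ℂ)/2 + Complex.I * x := by
      have := Complex.I_mul_I
      linear_combination (1/2 : ℂ) * Complex.I_mul_I
    have hexp : -(Complex.I * (t : ℂ) * ((x : ℂ) + Complex.I / 2))
        = (t:ℂ)/2 + (↑(-2 * π * x * w) * Complex.I) := by
      have h1 : ((-2 * π * x * w : ℝ) : ℂ) = -((t:ℂ) * x) := by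
        push_cast
        have : (2:ℂ) * π * w = t := by exact_mod_cast congrArg Complex.ofReal hw2
        linear_combination -(x:ℂ) * this
      rw [h1]
      linear_combination (-(t:ℂ)/2) * Complex.I_mul_I
    rw [hbase, hexp, Complex.exp_add, smul_eq_mul]
    ring
  rw [main, key, mul_zero]
end
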